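/- Let M > 0 and define 𝔐_{+,−}(ξ, η) := | ⟨ξ − η⟩ − ⟨ξ⟩_M − ⟨η⟩_M | for ξ, η ∈ ℝ³, where ⟨ζ⟩ := (1 + |ζ|²)^{1/2} and ⟨ζ⟩_M := (M² + |ζ|²)^{1/2}. Then there exist constants c, C > 0, depending only on M, such that for all ξ, η ∈ ℝ³, c · A(ξ, η) ≤ 𝔐_{+,−}(ξ, η) ≤ C · A(ξ, η), where A(ξ, η) := (1/(⟨ξ⟩ + ⟨η⟩)) · | M² (|ξ| − |η|)² / (⟨ξ⟩_M ⟨η⟩_M + |ξ| |η| + M²) + |ξ| |η| + ξ·η + (4M² − 1)/2 |. -/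
import Mathlib


open scoped RealInnerProductSpace

noncomputable section

abbrev Euc3 : Type := EuclideanSpace ℝ (Fin 3)

/-- `⟨ζ⟩_m = (m² + |ζ|²)^{1/2}`. -/
def hnorm (m : ℝ) (ζ : Euc3) : ℝ := Real.sqrt (m ^ 2 + ‖ζ‖ ^ 2)

/-- `⟨ζ⟩ = ⟨ζ⟩₁`. -/
def jap (ζ : Euc3) : ℝ := hnorm 1 ζ

/-- The resonant modulation function `𝔐_{+,−}(ξ,η) = |⟨ξ−η⟩ − ⟨ξ⟩_M − ⟨η⟩_M|`. -/
def modPM (M : ℝ) (ξ η : Euc3) : ℝ := |jap (ξ - η) - hnorm M ξ - hnorm M η|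

/-- The comparison quantity `A(ξ, η)` of Lemma 8.1 (ii). -/
def cmpA (M : ℝ) (ξ η : Euc3) : ℝ :=
  1 / (jap ξ + jap η) *
    |M ^ 2 * (‖ξ‖ - ‖η‖) ^ 2 / (hnorm M ξ * hnorm M η + ‖ξ‖ * ‖η‖ + M ^ 2)
      + ‖ξ‖ * ‖η‖ + ⟪ξ, η⟫ + (4 * M ^ 2 - 1) / 2|

private lemma aux_sqle {u v : ℝ} (hu : 0 ≤ u) (hv : 0 ≤ v) (h : u ^ 2 ≤ v ^ 2) : u ≤ v := by
  nlinarith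

private lemma aux_x_le_p {x p : ℝ} (hx : 0 ≤ x) (hp : 0 ≤ p) (h : p ^ 2 = 1 + x ^ 2) :
    x ≤ p := aux_sqle hx hp (by nlinarith)

private lemma aux_s_le {s p q x y ip : ℝ} (hs : 0 ≤ s) (hx : 0 ≤ x) (hy : 0 ≤ y)
    (hxp : x ≤ p) (hyq : y ≤ q)
    (hs2 : s ^ 2 = 1 + x ^ 2 - 2 * ip + y ^ 2)
    (hp2 : p ^ 2 = 1 + x ^ 2) (hq2 : q ^ 2 = 1 + y ^ 2)
    (hip : -ip ≤ x * y) : s ≤ p + q := by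
  have hp : 0 ≤ p := hx.trans hxp
  have hq : 0 ≤ q := hy.trans hyq
  have hpq : x * y ≤ p * q := mul_le_mul hxp hyq hy hp
  apply aux_sqle hs (by linarith)
  nlinarith [hpq, hip]

private lemma aux_scale_up {a p x M K : ℝ} (ha : 0 ≤ a) (hx : 0 ≤ x)
    (hMK : M ≤ K) (h1K : (1:ℝ) ≤ K) (hM : 0 < M)
    (ha2 : a ^ 2 = M ^ 2 + x ^ 2) (hp2 : p ^ 2 = 1 + x ^ 2) (hp : 0 ≤ p) :
    a ≤ K * p := by
  have hK : 0 < K := lt_of_lt_of_le one_pos h1K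
  apply aux_sqle ha (by positivity)
  rw [mul_pow, ha2, hp2]
  nlinarith [mul_le_mul hMK hMK hM.le hK.le, mul_le_mul h1K h1K zero_le_one hK.le,
    sq_nonneg x]

private lemma aux_scale_down {a p x M k : ℝ} (ha : 0 ≤ a) (hx : 0 ≤ x)
    (hkM : k ≤ M) (hk1 : k ≤ 1) (hk : 0 < k) (hM : 0 < M)
    (ha2 : a ^ 2 = M ^ 2 + x ^ 2) (hp2 : p ^ 2 = 1 + x ^ 2) (hp : 0 ≤ p) :
    k * p ≤ a := by
  apply aux_sqle (by positivity) ha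
  rw [mul_pow, ha2, hp2]
  nlinarith [mul_le_mul hkM hkM hk.le hM.le, mul_le_mul hk1 hk1 hk.le zero_le_one,
    sq_nonneg x]

set_option maxHeartbeats 1000000 in
/-- **Lemma 8.1 (ii): two-sided resonant modulation bound.** -/
theorem stmt19 (M : ℝ) (hM : 0 < M) :
    ∃ c C : ℝ, 0 < c ∧ 0 < C ∧ ∀ ξ η : Euc3,
      c * cmpA M ξ η ≤ modPM M ξ η ∧ modPM M ξ η ≤ C * cmpA M ξ η := by
  have hmax : (0:ℝ) < max M 1 := lt_max_of_lt_right one_pos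
  have hmin : (0:ℝ) < min M 1 := lt_min hM one_pos
  refine ⟨2 / (1 + max M 1), 2 / (min M 1), by positivity, by positivity, fun ξ η => ?_⟩
  set x := ‖ξ‖ with hxdef
  set y := ‖η‖ with hydef
  have hx : 0 ≤ x := norm_nonneg _
  have hy : 0 ≤ y := norm_nonneg _
  set ip := ⟪ξ, η⟫ with hipdef
  set a := hnorm M ξ with hadef
  set b := hnorm M η with hbdef
  set s := jap (ξ - η) with hsdef
  set p := jap ξ with hpdef
  set q := jap η with hqdef
  have ha2 : a ^ 2 = M ^ 2 + x ^ 2 := Real.sq_sqrt (by positivity)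
  have hb2 : b ^ 2 = M ^ 2 + y ^ 2 := Real.sq_sqrt (by positivity)
  have hp2 : p ^ 2 = 1 + x ^ 2 := by
    have h : p ^ 2 = 1 ^ 2 + x ^ 2 := Real.sq_sqrt (by positivity)
    linarith
  have hq2 : q ^ 2 = 1 + y ^ 2 := by
    have h : q ^ 2 = 1 ^ 2 + y ^ 2 := Real.sq_sqrt (by positivity)
    linarith
  have hs2 : s ^ 2 = 1 + x ^ 2 - 2 * ip + y ^ 2 := by
    have h1 : s ^ 2 = 1 ^ 2 + ‖ξ - η‖ ^ 2 := Real.sq_sqrt (by positivity)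
    have h2 : ‖ξ - η‖ ^ 2 = ‖ξ‖ ^ 2 - 2 * ⟪ξ, η⟫ + ‖η‖ ^ 2 := norm_sub_sq_real ξ η
    rw [h1, h2]; ring
  have ha_pos : 0 < a := Real.sqrt_pos.mpr (by positivity)
  have hb_pos : 0 < b := Real.sqrt_pos.mpr (by positivity)
  have hs_pos : 0 < s := Real.sqrt_pos.mpr (by positivity)
  have hp_pos : 0 < p := Real.sqrt_pos.mpr (by positivity)
  have hq_pos : 0 < q := Real.sqrt_pos.mpr (by positivity)
  have hip : |ip| ≤ x * y := abs_real_inner_le_norm ξ η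
  have hD : (0:ℝ) < a * b + x * y + M ^ 2 := by positivity
  -- the inner expression of `cmpA`
  set E : ℝ := M ^ 2 * (x - y) ^ 2 / (a * b + x * y + M ^ 2) + x * y + ip
      + (4 * M ^ 2 - 1) / 2 with hEdef
  have hkey : (a * b) ^ 2 = (x * y + M ^ 2) ^ 2 + M ^ 2 * (x - y) ^ 2 := by
    have h : (a * b) ^ 2 = (M ^ 2 + x ^ 2) * (M ^ 2 + y ^ 2) := by
      rw [mul_pow, ha2, hb2]
    rw [h]; ring
  have hab : a * b - (x * y + M ^ 2) = M ^ 2 * (x - y) ^ 2 / (a * b + x * y + M ^ 2) := by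
    rw [eq_div_iff hD.ne']
    linear_combination hkey
  have hE : E = a * b + ip + (2 * M ^ 2 - 1) / 2 := by
    rw [hEdef, ← hab]; ring
  have hS : 0 < s + a + b := by positivity
  have hmodeq : modPM M ξ η = 2 * |E| / (s + a + b) := by
    rw [eq_div_iff hS.ne']
    have h1 : (s - a - b) * (s + a + b) = (-2) * E := by
      rw [hE]
      linear_combination hs2 - ha2 - hb2
    have h0 : modPM M ξ η = |s - a - b| := rfl
    rw [h0]
    calc |s - a - b| * (s + a + b) = |s - a - b| * |s + a + b| := by
          rw [abs_of_pos hS]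
      _ = |(s - a - b) * (s + a + b)| := (abs_mul _ _).symm
      _ = |(-2) * E| := by rw [h1]
      _ = 2 * |E| := by rw [abs_mul]; norm_num
  have hcmp : cmpA M ξ η = |E| / (p + q) := by
    rw [cmpA, one_div_mul_eq_div]
  -- comparison of denominators
  have hxp : x ≤ p := aux_x_le_p hx hp_pos.le hp2
  have hyq : y ≤ q := aux_x_le_p hy hq_pos.le hq2
  have hip' : -ip ≤ x * y := by
    have h := abs_le.mp hip
    linarith [h.1]
  have hsle : s ≤ p + q := aux_s_le hs_pos.le hx hy hxp hyq hs2 hp2 hq2 hip'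
  have haM : a ≤ max M 1 * p :=
    aux_scale_up ha_pos.le hx (le_max_left _ _) (le_max_right _ _) hM ha2 hp2 hp_pos.le
  have hbM : b ≤ max M 1 * q :=
    aux_scale_up hb_pos.le hy (le_max_left _ _) (le_max_right _ _) hM hb2 hq2 hq_pos.le
  have hma : min M 1 * p ≤ a :=
    aux_scale_down ha_pos.le hx (min_le_left _ _) (min_le_right _ _) hmin hM ha2 hp2 hp_pos.le
  have hmb : min M 1 * q ≤ b :=
    aux_scale_down hb_pos.le hy (min_le_left _ _) (min_le_right _ _) hmin hM hb2 hq2 hq_pos.le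
  have hub : s + a + b ≤ (1 + max M 1) * (p + q) := by
    have hexp : (1 + max M 1) * (p + q) = (p + q) + (max M 1 * p + max M 1 * q) := by ring
    linarith
  have hlb : min M 1 * (p + q) ≤ s + a + b := by
    have h : min M 1 * (p + q) = min M 1 * p + min M 1 * q := by ring
    linarith [hs_pos.le, hma, hmb]
  rw [hmodeq, hcmp]
  have hE0 : (0:ℝ) ≤ 2 * |E| := by positivity
  constructor
  · rw [div_mul_div_comm]
    exact div_le_div_of_nonneg_left hE0 hS hub
  · rw [div_mul_div_comm]
    exact div_le_div_of_nonneg_left hE0 (by positivity) hlb
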